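/- Let V_n ⊆ V and Q_n ⊆ Q be finite-dimensional subspaces, with Q_n spanned by linearly independent elements ψ₁,…,ψ_{n_Q} ∈ M, and let M_n := {Σ_j c_j ψ_j : c_j ≥ 0} ⊆ Q_n be the generated convex cone. Suppose the discrete inf-sup constant β_n := inf_{q_n ∈ Q_n, q_n≠0} sup_{v_n ∈ V_n, v_n≠0} b(v_n, q_n)/(‖q_n‖_Q‖v_n‖_V) ≥ β₀ > 0. Then there exists a unique pair (u_n, λ_n) ∈ V_n × Q_n satisfying: a(u_n, v_n) + b(v_n, λ_n) = f(v_n) for all v_n ∈ V_n; g(q_n) − b(u_n, q_n) ≥ 0 for all q_n ∈ M_n; λ_n ∈ M_n; and g(λ_n) − b(u_n, λ_n) = 0. -/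

import Mathlib

/-!
The discrete feasible set `K_n` is a closed convex polyhedron in the finite-dimensional space
`V_n`, so Stampacchia's theorem (Banach's fixed point theorem for `x ↦ P_K (x - ρ (A x - F))`)
gives `u_n ∈ K_n` solving the variational inequality. Testing it with `u_n + z` for `z` in the
common kernel of the constraint functionals `b(·, ψ_j)` shows that the residual `f - a(u_n, ·)`
vanishes there, hence equals `Σ d_j b(·, ψ_j) = b(·, λ_n)` with `λ_n = Σ d_j ψ_j`. The inf-sup
condition makes `v ↦ (b(v, ψ_j))_j` onto `ℝ^{n_Q}`, so `u_n` maximises `d ⬝ᵥ x` over all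
`x ≤ (g(ψ_j))_j`; this forces `d ≥ 0` and complementarity. For uniqueness, subtracting two KKT
systems gives `a(u₁ - u₂, u₁ - u₂) ≤ 0`, and the inf-sup condition then identifies the multipliers.
-/

open RealInnerProductSpace InnerProductSpace

section Stampacchia

variable {E : Type*} [NormedAddCommGroup E] [InnerProductSpace ℝ E]

theorem norm_sub_le_of_inner_le_zero {x y p p' : E} (hp : ⟪x - p, p' - p⟫ ≤ 0)
    (hp' : ⟪y - p', p - p'⟫ ≤ 0) : ‖p - p'‖ ≤ ‖x - y‖ := by
  have hx : 0 ≤ ⟪x - p, p - p'⟫ := by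
    rw [← neg_sub p' p, inner_neg_right]
    linarith
  have hsq : ‖p - p'‖ ^ 2 ≤ ⟪x - y, p - p'⟫ := by
    rw [show x - y = (x - p) + (p - p') - (y - p') by abel, inner_sub_left, inner_add_left,
      real_inner_self_eq_norm_sq]
    linarith
  nlinarith [real_inner_le_norm (x - y) (p - p'), norm_nonneg (p - p'), norm_nonneg (x - y)]

theorem exists_contraction_sub_smul (T : E →L[ℝ] E) {α : ℝ} (hα : 0 < α)
    (hT : ∀ z, α * ‖z‖ ^ 2 ≤ ⟪T z, z⟫) :
    ∃ ρ : ℝ, 0 < ρ ∧ ∃ k : NNReal, k < 1 ∧ ∀ z, ‖z - ρ • T z‖ ≤ k * ‖z‖ := by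
  set C := max ‖T‖ α
  have hC : 0 < C := hα.trans_le (le_max_right _ _)
  have hαC : 0 < α / C := by positivity
  have hαC1 : α / C ≤ 1 := (div_le_one hC).2 (le_max_right _ _)
  -- `ρ = α / C ^ 2` minimises `1 - 2 ρ α + ρ ^ 2 C ^ 2`.
  set ρ := α / C ^ 2
  have hsq : ∀ z, ‖z - ρ • T z‖ ^ 2 ≤ (1 - (α / C) ^ 2) * ‖z‖ ^ 2 := by
    intro z
    have hTz : ‖T z‖ ≤ C * ‖z‖ := (T.le_opNorm z).trans (by gcongr; exact le_max_left _ _)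
    have hρC : ρ * C ^ 2 = α := div_mul_cancel₀ α (by positivity)
    calc ‖z - ρ • T z‖ ^ 2 = ‖z‖ ^ 2 - 2 * ρ * ⟪T z, z⟫ + ρ ^ 2 * ‖T z‖ ^ 2 := by
          rw [norm_sub_sq_real, real_inner_smul_right, real_inner_comm, norm_smul,
            Real.norm_of_nonneg (by positivity)]
          ring
      _ ≤ ‖z‖ ^ 2 - 2 * ρ * (α * ‖z‖ ^ 2) + ρ ^ 2 * (C * ‖z‖) ^ 2 := by
          gcongr
          · exact hT z
      _ = (1 - 2 * (ρ * α) + ρ * (ρ * C ^ 2)) * ‖z‖ ^ 2 := by ring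
      _ = (1 - (α / C) ^ 2) * ‖z‖ ^ 2 := by
          rw [hρC, show ρ * α = (α / C) ^ 2 by simp only [ρ]; field_simp]
          ring
  have hk : 0 ≤ 1 - (α / C) ^ 2 := by nlinarith
  refine ⟨ρ, by positivity, (√(1 - (α / C) ^ 2)).toNNReal, ?_, fun z => ?_⟩
  · rw [Real.toNNReal_lt_one, Real.sqrt_lt' one_pos]
    nlinarith
  · rw [Real.coe_toNNReal _ (Real.sqrt_nonneg _), ← Real.sqrt_sq (norm_nonneg z),
      ← Real.sqrt_mul' _ (by positivity), Real.le_sqrt (norm_nonneg _) (by positivity)]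
    exact hsq z

theorem stampacchia [CompleteSpace E] {K : Set E} (hne : K.Nonempty) (hcl : IsClosed K)
    (hcv : Convex ℝ K) (A : E →L[ℝ] E →L[ℝ] ℝ) {α : ℝ} (hα : 0 < α)
    (hA : ∀ v, α * ‖v‖ ^ 2 ≤ A v v) (F : E →L[ℝ] ℝ) :
    ∃ u ∈ K, ∀ v ∈ K, F (v - u) ≤ A u (v - u) := by
  have hproj (x : E) : ∃ p ∈ K, ∀ w ∈ K, ⟪x - p, w - p⟫ ≤ 0 := by
    obtain ⟨p, hp, hmin⟩ := exists_norm_eq_iInf_of_complete_convex hne hcl.isComplete hcv x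
    exact ⟨p, hp, (norm_eq_iInf_iff_real_inner_le_zero hcv hp).1 hmin⟩
  choose P hPK hP using hproj
  set T := continuousLinearMapOfBilin A
  obtain ⟨ρ, hρ, k, hk, hcontr⟩ :=
    exists_contraction_sub_smul T hα fun z => by rw [continuousLinearMapOfBilin_apply]; exact hA z
  set w := (toDual ℝ E).symm F
  -- The fixed points of `Φ` are exactly the solutions of the variational inequality.
  set Φ : E → E := fun x => P (x - ρ • (T x - w))
  have hΦ : ContractingWith k Φ := by
    refine ⟨hk, LipschitzWith.of_dist_le_mul fun x y => ?_⟩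
    rw [dist_eq_norm, dist_eq_norm]
    calc ‖Φ x - Φ y‖ ≤ ‖(x - ρ • (T x - w)) - (y - ρ • (T y - w))‖ :=
          norm_sub_le_of_inner_le_zero (hP _ _ (hPK _)) (hP _ _ (hPK _))
      _ = ‖(x - y) - ρ • T (x - y)‖ := by rw [map_sub]; congr 1; module
      _ ≤ k * ‖x - y‖ := hcontr _
  have hu : Φ (hΦ.fixedPoint Φ) = hΦ.fixedPoint Φ := hΦ.fixedPoint_isFixedPt
  set u := hΦ.fixedPoint Φ
  refine ⟨u, hu ▸ hPK _, fun v hv => ?_⟩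
  have hvi := hP (u - ρ • (T u - w)) v hv
  rw [show P (u - ρ • (T u - w)) = u from hu, sub_sub_cancel_left, inner_neg_left,
    real_inner_smul_left, inner_sub_left, continuousLinearMapOfBilin_apply,
    toDual_symm_apply] at hvi
  nlinarith

end Stampacchia

theorem LinearMap.surjective_pi_of_linearIndependent {ι F E : Type*} [Finite ι] [Field F]
    [AddCommGroup E] [Module F E] {L : ι → E →ₗ[F] F}
    (hL : LinearIndependent F fun i => ⇑(L i)) : Function.Surjective (LinearMap.pi L) := by
  rw [← LinearMap.range_eq_top, ← Submodule.span_eq (LinearMap.range _),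
    ← span_flip_eq_top_iff_linearIndependent.2 hL]
  rfl

theorem exists_eq_sum_smul_of_le_zero_on_iInf_ker {ι E : Type*} [Fintype ι] [AddCommGroup E]
    [Module ℝ E] {L : ι → E →ₗ[ℝ] ℝ} {ℓ : E →ₗ[ℝ] ℝ}
    (h : ∀ z, (∀ i, L i z = 0) → ℓ z ≤ 0) : ∃ d : ι → ℝ, ∑ i, d i • L i = ℓ := by
  refine (Submodule.mem_span_range_iff_exists_fun ℝ).1 (mem_span_of_iInf_ker_le_ker ?_)
  intro z hz
  simp only [Submodule.mem_iInf, LinearMap.mem_ker] at hz ⊢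
  have hneg := h (-z) fun i => by rw [map_neg, hz i, neg_zero]
  rw [map_neg] at hneg
  exact le_antisymm (h z hz) (by linarith)

theorem nonneg_and_dotProduct_sub_eq_zero {ι : Type*} [Fintype ι] {d y G : ι → ℝ} (hy : y ≤ G)
    (hmax : ∀ x ≤ G, d ⬝ᵥ x ≤ d ⬝ᵥ y) : 0 ≤ d ∧ d ⬝ᵥ (G - y) = 0 := by
  classical
  have hd : 0 ≤ d := fun i => by
    have := hmax (y - Pi.single i 1) ((sub_le_self _ (by simp [Pi.single_nonneg])).trans hy)
    rw [dotProduct_sub, dotProduct_single, mul_one] at this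
    simpa using this
  refine ⟨hd, le_antisymm ?_ (dotProduct_nonneg_of_nonneg hd (sub_nonneg.2 hy))⟩
  rw [dotProduct_sub]
  linarith [hmax G le_rfl]

theorem exists_kkt_of_linearIndependent {E ι : Type*} [NormedAddCommGroup E]
    [InnerProductSpace ℝ E] [FiniteDimensional ℝ E] [Fintype ι]
    (A : E →L[ℝ] E →L[ℝ] ℝ) {α : ℝ} (hα : 0 < α) (hA : ∀ v, α * ‖v‖ ^ 2 ≤ A v v)
    (F : E →L[ℝ] ℝ) {L : ι → E →ₗ[ℝ] ℝ} (hL : LinearIndependent ℝ fun i => ⇑(L i))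
    {G : ι → ℝ} (hK : ∃ v, LinearMap.pi L v ≤ G) :
    ∃ u : E, ∃ d : ι → ℝ, LinearMap.pi L u ≤ G ∧ 0 ≤ d ∧
      (∀ v, A u v + d ⬝ᵥ LinearMap.pi L v = F v) ∧ d ⬝ᵥ (G - LinearMap.pi L u) = 0 := by
  have := FiniteDimensional.complete ℝ E
  set P := LinearMap.pi L
  obtain ⟨u, hu, hvi⟩ := stampacchia (K := P ⁻¹' Set.Iic G) hK
    (isClosed_Iic.preimage P.continuous_of_finiteDimensional) ((convex_Iic G).linear_preimage P)
    A hα hA F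
  obtain ⟨d, hsum⟩ := exists_eq_sum_smul_of_le_zero_on_iInf_ker (L := L)
    (ℓ := ((F - A u : E →L[ℝ] ℝ) : E →ₗ[ℝ] ℝ)) fun z hz => by
      have hPz : P z = 0 := funext hz
      have := hvi (u + z) (by simpa [Set.mem_preimage, map_add, hPz] using hu)
      simpa using this
  have hres : ∀ v, F v - A u v = d ⬝ᵥ P v := fun v => by
    simpa [dotProduct, P] using (LinearMap.congr_fun hsum v).symm
  have hmax : ∀ x ≤ G, d ⬝ᵥ x ≤ d ⬝ᵥ P u := by
    intro x hx
    obtain ⟨v, rfl⟩ : ∃ v, P v = x := LinearMap.surjective_pi_of_linearIndependent hL x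
    have := hvi v hx
    rw [map_sub, map_sub] at this
    linarith [hres u, hres v]
  obtain ⟨hd0, hcompl⟩ := nonneg_and_dotProduct_sub_eq_zero hu hmax
  exact ⟨u, d, hu, hd0, fun v => by linarith [hres v], hcompl⟩

section DiscreteKKT

variable {V Q ι : Type*} [NormedAddCommGroup V] [NormedAddCommGroup Q] [NormedSpace ℝ Q]

def nonnegCombinations [Fintype ι] (ψ : ι → Q) : Set Q :=
  {q | ∃ c : ι → ℝ, (∀ j, 0 ≤ c j) ∧ q = ∑ j, c j • ψ j}

theorem forall_mem_nonnegCombinations_le_iff [Fintype ι] {ψ : ι → Q} {φ γ : Q →L[ℝ] ℝ} :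
    (∀ q ∈ nonnegCombinations ψ, φ q ≤ γ q) ↔ ∀ j, φ (ψ j) ≤ γ (ψ j) := by
  classical
  refine ⟨fun h j => ?_, ?_⟩
  · simpa using h (ψ j) ⟨Pi.single j 1, fun i => by by_cases h : i = j <;> simp [h], by simp⟩
  · rintro h q ⟨c, hc, rfl⟩
    simp only [map_sum, map_smul, smul_eq_mul]
    exact Finset.sum_le_sum fun j _ => mul_le_mul_of_nonneg_left (h j) (hc j)

variable [NormedSpace ℝ V]

def IsKKTPair (a : V →L[ℝ] V →L[ℝ] ℝ) (b : V →L[ℝ] Q →L[ℝ] ℝ) (f : V →L[ℝ] ℝ)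
    (g : Q →L[ℝ] ℝ) (Vn : Submodule ℝ V) (Qn : Submodule ℝ Q) (Mn : Set Q) (p : V × Q) : Prop :=
  p.1 ∈ Vn ∧ p.2 ∈ Qn ∧ (∀ vn ∈ Vn, a p.1 vn + b vn p.2 = f vn) ∧
    (∀ qn ∈ Mn, 0 ≤ g qn - b p.1 qn) ∧ p.2 ∈ Mn ∧ g p.2 - b p.1 p.2 = 0

variable {a : V →L[ℝ] V →L[ℝ] ℝ} {b : V →L[ℝ] Q →L[ℝ] ℝ} {f : V →L[ℝ] ℝ} {g : Q →L[ℝ] ℝ}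
  {Vn : Submodule ℝ V} {Qn : Submodule ℝ Q}

theorem eq_zero_of_infSup {β₀ : ℝ} (hβ₀ : 0 < β₀) {q : Q}
    (hq : q ≠ 0 → β₀ * ‖q‖ ≤ sSup {r : ℝ | ∃ vn ∈ Vn, vn ≠ 0 ∧ r = b vn q / ‖vn‖})
    (hb : ∀ v ∈ Vn, b v q = 0) : q = 0 := by
  by_contra hq0
  have hsup : sSup {r : ℝ | ∃ vn ∈ Vn, vn ≠ 0 ∧ r = b vn q / ‖vn‖} ≤ 0 :=
    Real.sSup_nonpos fun r ⟨v, hv, _, hr⟩ => by simp [hr, hb v hv]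
  nlinarith [hq hq0, norm_pos_iff.2 hq0]

theorem IsKKTPair.unique {Mn : Set Q} {α : ℝ} (hα : 0 < α) (hcoer : ∀ v, α * ‖v‖ ^ 2 ≤ a v v)
    (hinj : ∀ q ∈ Qn, (∀ v ∈ Vn, b v q = 0) → q = 0) {p₁ p₂ : V × Q}
    (h₁ : IsKKTPair a b f g Vn Qn Mn p₁) (h₂ : IsKKTPair a b f g Vn Qn Mn p₂) : p₁ = p₂ := by
  rcases p₁ with ⟨u₁, μ₁⟩
  rcases p₂ with ⟨u₂, μ₂⟩
  obtain ⟨hu₁, hμ₁, heq₁, hfeas₁, hM₁, hcompl₁⟩ := h₁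
  obtain ⟨hu₂, hμ₂, heq₂, hfeas₂, hM₂, hcompl₂⟩ := h₂
  have hu : u₁ = u₂ := by
    have hw := Vn.sub_mem hu₁ hu₂
    have ha : a (u₁ - u₂) (u₁ - u₂) ≤ 0 := by
      have := heq₁ _ hw; have := heq₂ _ hw; have := hfeas₁ μ₂ hM₂; have := hfeas₂ μ₁ hM₁
      simp only [map_sub, sub_apply] at *
      linarith
    have hsq : ‖u₁ - u₂‖ ^ 2 = 0 := le_antisymm (by nlinarith [hcoer (u₁ - u₂)]) (sq_nonneg _)
    simpa [sub_eq_zero] using hsq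
  subst hu
  refine Prod.ext rfl (sub_eq_zero.1 (hinj _ (Qn.sub_mem hμ₁ hμ₂) fun v hv => ?_))
  rw [map_sub]
  linarith [heq₁ v hv, heq₂ v hv]

end DiscreteKKT

theorem exists_isKKTPair {V Q ι : Type*} [NormedAddCommGroup V] [InnerProductSpace ℝ V]
    [NormedAddCommGroup Q] [NormedSpace ℝ Q] [Fintype ι] {a : V →L[ℝ] V →L[ℝ] ℝ} {α : ℝ}
    (hα : 0 < α) (hcoer : ∀ v, α * ‖v‖ ^ 2 ≤ a v v) {b : V →L[ℝ] Q →L[ℝ] ℝ} {f : V →L[ℝ] ℝ}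
    {g : Q →L[ℝ] ℝ} {Vn : Submodule ℝ V} [FiniteDimensional ℝ Vn] {ψ : ι → Q}
    (hψ : LinearIndependent ℝ ψ)
    (hinj : ∀ q ∈ Submodule.span ℝ (Set.range ψ), (∀ v ∈ Vn, b v q = 0) → q = 0)
    (hK : {vn : V | vn ∈ Vn ∧ ∀ qn ∈ nonnegCombinations ψ, b vn qn ≤ g qn}.Nonempty) :
    ∃ p, IsKKTPair a b f g Vn (Submodule.span ℝ (Set.range ψ)) (nonnegCombinations ψ) p := by
  have hspan (c : ι → ℝ) : ∑ j, c j • ψ j ∈ Submodule.span ℝ (Set.range ψ) :=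
    (Submodule.mem_span_range_iff_exists_fun ℝ).2 ⟨c, rfl⟩
  have hb (v : V) (c : ι → ℝ) : b v (∑ j, c j • ψ j) = c ⬝ᵥ fun j => b v (ψ j) := by
    simp [map_sum, dotProduct]
  set L : ι → Vn →ₗ[ℝ] ℝ := fun j => (b.flip (ψ j) : V →ₗ[ℝ] ℝ) ∘ₗ Vn.subtype
  have hL : LinearIndependent ℝ fun j => ⇑(L j) := by
    refine Fintype.linearIndependent_iff.2 fun c hc =>
      Fintype.linearIndependent_iff.1 hψ c (hinj _ (hspan c) fun v hv => ?_)
    simpa [hb, dotProduct, L] using congrFun hc ⟨v, hv⟩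
  obtain ⟨v₀, hv₀, hv₀K⟩ := hK
  obtain ⟨u, d, hu, hd, heq, hcompl⟩ := exists_kkt_of_linearIndependent
    (a.bilinearComp Vn.subtypeL Vn.subtypeL) hα (fun v => hcoer v) (f.comp Vn.subtypeL) hL
    (G := fun j => g (ψ j)) ⟨⟨v₀, hv₀⟩, forall_mem_nonnegCombinations_le_iff.1 hv₀K⟩
  refine ⟨(u, ∑ j, d j • ψ j), u.2, hspan d, fun v hv => ?_,
    fun q hq => sub_nonneg.2 (forall_mem_nonnegCombinations_le_iff.2 hu q hq), ⟨d, hd, rfl⟩, ?_⟩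
  · simpa [hb, L, dotProduct] using heq ⟨v, hv⟩
  · simpa [hb, L, map_sum, dotProduct, mul_sub] using hcompl

theorem stmt_5_general {V Q : Type*}
    [NormedAddCommGroup V] [InnerProductSpace ℝ V]
    [NormedAddCommGroup Q] [InnerProductSpace ℝ Q]
    (a : V →L[ℝ] V →L[ℝ] ℝ) (α : ℝ) (hα : 0 < α)
    (hcoer : ∀ v : V, α * ‖v‖ ^ 2 ≤ a v v)
    (b : V →L[ℝ] Q →L[ℝ] ℝ) (f : V →L[ℝ] ℝ) (g : Q →L[ℝ] ℝ)
    (Vn : Submodule ℝ V) (hVn : FiniteDimensional ℝ Vn)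
    (nQ : ℕ) (ψ : Fin nQ → Q)
    (hψli : LinearIndependent ℝ ψ)
    (Qn : Submodule ℝ Q) (hQn : Qn = Submodule.span ℝ (Set.range ψ))
    (Mn : Set Q)
    (hMn : Mn = {q : Q | ∃ c : Fin nQ → ℝ, (∀ j, 0 ≤ c j) ∧ q = ∑ j, c j • ψ j})
    (β₀ : ℝ) (hβ₀ : 0 < β₀)
    (hinfsup : ∀ qn ∈ Qn, qn ≠ 0 →
      β₀ * ‖qn‖ ≤ sSup {r : ℝ | ∃ vn ∈ Vn, vn ≠ 0 ∧ r = b vn qn / ‖vn‖})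
    (hKnne : {vn : V | vn ∈ Vn ∧ ∀ qn ∈ Mn, b vn qn ≤ g qn}.Nonempty) :
    ∃! p : V × Q, p.1 ∈ Vn ∧ p.2 ∈ Qn ∧
      (∀ vn ∈ Vn, a p.1 vn + b vn p.2 = f vn) ∧
      (∀ qn ∈ Mn, 0 ≤ g qn - b p.1 qn) ∧
      p.2 ∈ Mn ∧ g p.2 - b p.1 p.2 = 0 := by
  subst hQn hMn
  have hinj : ∀ q ∈ Submodule.span ℝ (Set.range ψ), (∀ v ∈ Vn, b v q = 0) → q = 0 :=
    fun q hq => eq_zero_of_infSup hβ₀ (hinfsup q hq)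
  exact existsUnique_of_exists_of_unique (exists_isKKTPair hα hcoer hψli hinj hKnne)
    fun _ _ => IsKKTPair.unique hα hcoer hinj

/-- Discrete KKT system: on finite-dimensional subspaces `V_n` and
`Q_n = span{ψ₁,…,ψ_{n_Q}}` with `ψ_j ∈ M` linearly independent, under the
discrete inf-sup condition there exists a unique discrete KKT pair `(u_n, λ_n)`. -/
theorem stmt_5 {V Q : Type*}
    [NormedAddCommGroup V] [InnerProductSpace ℝ V] [CompleteSpace V]
    [NormedAddCommGroup Q] [InnerProductSpace ℝ Q] [CompleteSpace Q]
    (a : V →L[ℝ] V →L[ℝ] ℝ) (α : ℝ) (hα : 0 < α)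
    (hcoer : ∀ v : V, α * ‖v‖ ^ 2 ≤ a v v)
    (b : V →L[ℝ] Q →L[ℝ] ℝ) (f : V →L[ℝ] ℝ) (g : Q →L[ℝ] ℝ)
    (M : Set Q) (hMne : M.Nonempty) (hMcl : IsClosed M) (hMcv : Convex ℝ M)
    (hMcone : ∀ c : ℝ, 0 ≤ c → ∀ q ∈ M, c • q ∈ M)
    (Vn : Submodule ℝ V) (hVn : FiniteDimensional ℝ Vn)
    (nQ : ℕ) (ψ : Fin nQ → Q) (hψM : ∀ j, ψ j ∈ M)
    (hψli : LinearIndependent ℝ ψ)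
    (Qn : Submodule ℝ Q) (hQn : Qn = Submodule.span ℝ (Set.range ψ))
    (Mn : Set Q)
    (hMn : Mn = {q : Q | ∃ c : Fin nQ → ℝ, (∀ j, 0 ≤ c j) ∧ q = ∑ j, c j • ψ j})
    (β₀ : ℝ) (hβ₀ : 0 < β₀)
    (hinfsup : ∀ qn ∈ Qn, qn ≠ 0 →
      β₀ * ‖qn‖ ≤ sSup {r : ℝ | ∃ vn ∈ Vn, vn ≠ 0 ∧ r = b vn qn / ‖vn‖})
    (hKnne : {vn : V | vn ∈ Vn ∧ ∀ qn ∈ Mn, b vn qn ≤ g qn}.Nonempty) :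
    ∃! p : V × Q, p.1 ∈ Vn ∧ p.2 ∈ Qn ∧
      (∀ vn ∈ Vn, a p.1 vn + b vn p.2 = f vn) ∧
      (∀ qn ∈ Mn, 0 ≤ g qn - b p.1 qn) ∧
      p.2 ∈ Mn ∧ g p.2 - b p.1 p.2 = 0 :=
  stmt_5_general a α hα hcoer b f g Vn hVn nQ ψ hψli Qn hQn Mn hMn β₀ hβ₀ hinfsup hKnne
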